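/- For all n ≥ 2, the bi-periodic Jacobsthal numbers satisfy j_{2n} = (ab+4)·j_{2n-2} − 4·j_{2n-4} and j_{2n+1} = (ab+4)·j_{2n-1} − 4·j_{2n-3}. -/

import Mathlib

noncomputable def jj (a b : ℝ) : ℕ → ℝ
  | 0 => 0
  | 1 => 1
  | n + 2 => (if Even (n + 2) then a else b) * jj a b (n + 1) + 2 * jj a b n

/-! Writing `c k` for the coefficient `a` or `b` used at step `k`, consecutive coefficients always
multiply to `a * b`. Unfolding `j (k + 4)` twice and eliminating `c k * j (k + 1)` through
`j (k + 2) = c k * j (k + 1) + 2 * j k` gives `j (k + 4) = (a * b + 4) * j (k + 2) - 4 * j k` for every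
`k`, of which the theorem is the even and the odd case. -/

namespace jj

variable (a b : ℝ)

lemma add_two (k : ℕ) :
    jj a b (k + 2) = (if Even k then a else b) * jj a b (k + 1) + 2 * jj a b k := by
  simp only [jj, Nat.even_add, even_two, iff_true]

lemma coeff_mul_coeff_succ (k : ℕ) :
    (if Even k then a else b) * (if Even (k + 1) then a else b) = a * b := by
  by_cases hk : Even k
  · simp [hk, Nat.even_add_one]
  · simp [hk, Nat.even_add_one, mul_comm]

lemma add_four (k : ℕ) :
    jj a b (k + 4) = (a * b + 4) * jj a b (k + 2) - 4 * jj a b k := by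
  have h4 := add_two a b (k + 2)
  have h3 := add_two a b (k + 1)
  have h2 := add_two a b k
  have hc := coeff_mul_coeff_succ a b k
  simp only [Nat.even_add, even_two, iff_true] at h4
  linear_combination h4 + (if Even k then a else b) * h3 - 2 * h2 + jj a b (k + 2) * hc

end jj

theorem stmt0 (a b : ℝ) (n : ℕ) (hn : 2 ≤ n) :
    jj a b (2 * n) = (a * b + 4) * jj a b (2 * n - 2) - 4 * jj a b (2 * n - 4) ∧
    jj a b (2 * n + 1) = (a * b + 4) * jj a b (2 * n - 1) - 4 * jj a b (2 * n - 3) := by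
  obtain ⟨m, rfl⟩ := Nat.exists_eq_add_of_le' hn
  refine ⟨?_, ?_⟩
  · rw [show 2 * (m + 2) = 2 * m + 4 by ring, show 2 * m + 4 - 2 = 2 * m + 2 by omega,
      show 2 * m + 4 - 4 = 2 * m by omega]
    exact jj.add_four a b (2 * m)
  · rw [show 2 * (m + 2) = 2 * m + 4 by ring, show 2 * m + 4 - 1 = 2 * m + 1 + 2 by omega,
      show 2 * m + 4 - 3 = 2 * m + 1 by omega]
    exact jj.add_four a b (2 * m + 1)
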